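/- Let (X, {A_x}_{x∈X}, 𝒜) and (X, {B_x}_{x∈X}, ℬ) be continuous fields of C*-algebras over the same compact Hausdorff space X, and let (φ_x : A_x → B_x)_{x∈X} be a family of *-homomorphisms. Consider the statements: (i) the map φ : 𝒜 → ℬ, a ↦ (x ↦ φ_x(a(x))), is a well-defined continuous field morphism; (ii) for every x ∈ X, every finite set F ⊆ 𝒜 and every ε > 0 there exist an open neighborhood V of x and a continuous field morphism χ : 𝒜 → ℬ such that ‖φ_v(a(v)) − χ(a)(v)‖ < ε for all a ∈ F and all v ∈ V; (iii) the map X → ⨆_{x∈X} Hom_{C*}(A_x, B_x), x ↦ (φ_x, x), is continuous with respect to τ_{(𝒜→ℬ)}. Then (i) and (ii) are equivalent and each implies (iii); moreover, if Hom_{F_{C*}}(𝒜, ℬ) satisfies the projective property (PP), then (iii) implies (ii) (hence all three statements are equivalent). -/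

import Mathlib

/-- A continuous field of C*-algebras over a topological space `X`, in the sense of
Definition 2.1: `𝓐` is a set of sections of the family `{A x}` which is a C*-algebra
under pointwise operations and the supremum norm (encoded by closure under the
*-algebra operations, boundedness of sections, and completeness, i.e. closure under
uniform approximation); evaluation at each point is surjective; the norm functions
of sections are continuous; and `𝓐` is stable under `C(X)`-multiplication. -/
structure IsContinuousField {X : Type*} [TopologicalSpace X]
    {A : X → Type*} [∀ x, NormedRing (A x)] [∀ x, StarRing (A x)]
    [∀ x, CStarRing (A x)] [∀ x, NormedAlgebra ℂ (A x)] [∀ x, StarModule ℂ (A x)]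
    [∀ x, CompleteSpace (A x)] (𝓐 : Set (Π x, A x)) : Prop where
  zero_mem : (0 : Π x, A x) ∈ 𝓐
  add_mem : ∀ a ∈ 𝓐, ∀ b ∈ 𝓐, a + b ∈ 𝓐
  neg_mem : ∀ a ∈ 𝓐, -a ∈ 𝓐
  smul_mem : ∀ (c : ℂ), ∀ a ∈ 𝓐, c • a ∈ 𝓐
  mul_mem : ∀ a ∈ 𝓐, ∀ b ∈ 𝓐, a * b ∈ 𝓐
  star_mem : ∀ a ∈ 𝓐, star a ∈ 𝓐
  norm_bdd : ∀ a ∈ 𝓐, ∃ M : ℝ, ∀ x, ‖a x‖ ≤ M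
  uniformly_closed : ∀ a : Π x, A x,
    (∀ ε > (0 : ℝ), ∃ c ∈ 𝓐, ∀ x, ‖a x - c x‖ < ε) → a ∈ 𝓐
  eval_surjective : ∀ (x : X) (ξ : A x), ∃ a ∈ 𝓐, a x = ξ
  norm_continuous : ∀ a ∈ 𝓐, Continuous fun x => ‖a x‖
  contMul_mem : ∀ (l : C(X, ℂ)), ∀ a ∈ 𝓐, (fun x => l x • a x) ∈ 𝓐

/-- The topology `τ_𝓐` on the total space `⨆ₓ A x`, generated by the basic sets
`V_ε^c = {(ξ, x) | x ∈ V, ‖ξ - c x‖ < ε}` for `V ⊆ X` open, `c ∈ 𝓐` and `ε > 0`. -/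
def fieldTopology {X : Type*} [TopologicalSpace X]
    {A : X → Type*} [∀ x, NormedRing (A x)] (𝓐 : Set (Π x, A x)) :
    TopologicalSpace (Σ x, A x) :=
  TopologicalSpace.generateFrom
    { S | ∃ (V : Set X) (c : Π x, A x) (ε : ℝ), IsOpen V ∧ c ∈ 𝓐 ∧ 0 < ε ∧
        S = { p : Σ x, A x | p.1 ∈ V ∧ ‖p.2 - c p.1‖ < ε } }

section HomBundle

variable {X : Type*} [TopologicalSpace X] {A B : X → Type*}
  [∀ x, NormedRing (A x)] [∀ x, StarRing (A x)] [∀ x, CStarRing (A x)]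
  [∀ x, NormedAlgebra ℂ (A x)] [∀ x, StarModule ℂ (A x)] [∀ x, CompleteSpace (A x)]
  [∀ x, NormedRing (B x)] [∀ x, StarRing (B x)] [∀ x, CStarRing (B x)]
  [∀ x, NormedAlgebra ℂ (B x)] [∀ x, StarModule ℂ (B x)] [∀ x, CompleteSpace (B x)]

/-- A family of fiberwise *-homomorphisms is (the family induced by) a continuous field
morphism `𝓐 → 𝓑` precisely when it sends every section of `𝓐` to a section of `𝓑`. -/
def IsFieldMorphismFamily (𝓐 : Set (Π x, A x)) (𝓑 : Set (Π x, B x))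
    (χ : Π x, A x →⋆ₙₐ[ℂ] B x) : Prop :=
  ∀ a ∈ 𝓐, (fun x => χ x (a x)) ∈ 𝓑

/-- The topology `τ_{(𝓐 → 𝓑)}` on the Hom-bundle `⨆ₓ Hom_{C*}(A x, B x)`, generated by
the basic sets `V_{(F,ε)}^χ = {(ξ, x) | x ∈ V, ‖ξ (a x) - χ x (a x)‖ < ε for all a ∈ F}`
where `V ⊆ X` is open, `χ` is a continuous field morphism `𝓐 → 𝓑`, `F ⊆ 𝓐` is finite
and `ε > 0`. -/
def homBundleTopology (𝓐 : Set (Π x, A x)) (𝓑 : Set (Π x, B x)) :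
    TopologicalSpace (Σ x, A x →⋆ₙₐ[ℂ] B x) :=
  TopologicalSpace.generateFrom
    { S | ∃ (V : Set X) (χ : Π x, A x →⋆ₙₐ[ℂ] B x) (F : Finset (Π x, A x)) (ε : ℝ),
        IsOpen V ∧ IsFieldMorphismFamily 𝓐 𝓑 χ ∧ ↑F ⊆ 𝓐 ∧ 0 < ε ∧
        S = { p : Σ x, A x →⋆ₙₐ[ℂ] B x |
                p.1 ∈ V ∧ ∀ a ∈ F, ‖p.2 (a p.1) - χ p.1 (a p.1)‖ < ε } }

/-- The projective property (PP): every fiberwise *-homomorphism `A x → B x` is the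
fiber at `x` of some continuous field morphism `𝓐 → 𝓑`. -/
def ProjectiveProperty (𝓐 : Set (Π x, A x)) (𝓑 : Set (Π x, B x)) : Prop :=
  ∀ (x : X) (ξ : A x →⋆ₙₐ[ℂ] B x),
    ∃ χ : Π x, A x →⋆ₙₐ[ℂ] B x, IsFieldMorphismFamily 𝓐 𝓑 χ ∧ χ x = ξ

end HomBundle


/-!
Over a compact Hausdorff space, a section that is locally uniformly approximable by sections
of a continuous field is itself a section: a partition of unity subordinate to a finite cover
glues the local approximants, and the error stays below `ε` because balls are convex. Applied
to `x ↦ φ x (a x)` this gives (ii) ⇒ (i). The basic open sets of `τ_{(𝓐 → 𝓑)}` pull back along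
`x ↦ (φ x, x)` to finite intersections of sets `{x | ‖φ x (a x) - χ x (a x)‖ < ε}`, which are
open when `φ` is a morphism. Conversely, (PP) yields a morphism `χ` with `χ x = φ x`, and the
preimage of its basic neighbourhood of `(φ x, x)` is the neighbourhood `V` required in (ii).
-/

open Set

section ContinuousField

variable {X : Type*} [TopologicalSpace X] {B : X → Type*}
  [∀ x, NormedRing (B x)] [∀ x, StarRing (B x)] [∀ x, CStarRing (B x)]
  [∀ x, NormedAlgebra ℂ (B x)] [∀ x, StarModule ℂ (B x)] [∀ x, CompleteSpace (B x)]
  {𝓑 : Set (Π x, B x)}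

theorem IsContinuousField.sum_mem (h𝓑 : IsContinuousField 𝓑) {ι : Type*} {s : Finset ι}
    {g : ι → Π x, B x} (hg : ∀ i ∈ s, g i ∈ 𝓑) : ∑ i ∈ s, g i ∈ 𝓑 :=
  Finset.sum_induction g (· ∈ 𝓑) (fun a b ha hb => h𝓑.add_mem a ha b hb) h𝓑.zero_mem hg

theorem IsContinuousField.sub_mem (h𝓑 : IsContinuousField 𝓑) {a b : Π x, B x}
    (ha : a ∈ 𝓑) (hb : b ∈ 𝓑) : a - b ∈ 𝓑 := by
  simpa only [sub_eq_add_neg] using h𝓑.add_mem a ha (-b) (h𝓑.neg_mem b hb)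

theorem IsContinuousField.mem_of_locally_approximable [CompactSpace X] [T2Space X]
    (h𝓑 : IsContinuousField 𝓑) {s : Π x, B x}
    (hs : ∀ (x : X), ∀ ε > (0 : ℝ), ∃ V : Set X, IsOpen V ∧ x ∈ V ∧
      ∃ c ∈ 𝓑, ∀ v ∈ V, ‖s v - c v‖ < ε) :
    s ∈ 𝓑 := by
  refine h𝓑.uniformly_closed s fun ε hε => ?_
  choose V hVo hxV c hc hsc using fun x => hs x ε hε
  obtain ⟨t, ht⟩ := isCompact_univ.elim_finite_subcover V hVo
    fun x _ => mem_iUnion.2 ⟨x, hxV x⟩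
  obtain ⟨f, hf⟩ := PartitionOfUnity.exists_isSubordinate isClosed_univ
    (fun i : t => V i) (fun i => hVo i) fun x _ => by
      obtain ⟨i, hi, hxi⟩ := mem_iUnion₂.1 (ht (mem_univ x))
      exact mem_iUnion.2 ⟨⟨i, hi⟩, hxi⟩
  refine ⟨∑ i : t, fun x => ((f i x : ℝ) : ℂ) • c i x, h𝓑.sum_mem fun i _ => ?_, fun x => ?_⟩
  · exact h𝓑.contMul_mem ⟨fun x => (f i x : ℂ), by fun_prop⟩ _ (hc i)
  · have hmem : ∑ᶠ i, f i x • c i x ∈ Metric.ball (s x) ε :=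
      f.finsum_smul_mem_convex (g := fun i _ => c i x) (mem_univ x)
        (fun i hi => mem_ball_iff_norm'.2 (hsc i x (hf i (subset_closure hi))))
        (convex_ball _ _)
    simpa only [finsum_eq_sum_of_fintype, Finset.sum_apply, Complex.coe_smul,
      mem_ball_iff_norm'] using hmem

end ContinuousField

section Criterion

variable {X : Type*} [TopologicalSpace X] {A B : X → Type*}
  [∀ x, NormedRing (A x)] [∀ x, StarRing (A x)] [∀ x, NormedAlgebra ℂ (A x)]
  [∀ x, NormedRing (B x)] [∀ x, StarRing (B x)] [∀ x, NormedAlgebra ℂ (B x)]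
  {𝓐 : Set (Π x, A x)} {𝓑 : Set (Π x, B x)} {φ χ : Π x, A x →⋆ₙₐ[ℂ] B x}

def LocallyApproxByMorphisms (𝓐 : Set (Π x, A x)) (𝓑 : Set (Π x, B x))
    (φ : Π x, A x →⋆ₙₐ[ℂ] B x) : Prop :=
  ∀ (x : X) (F : Finset (Π x, A x)), ↑F ⊆ 𝓐 → ∀ ε > (0 : ℝ),
    ∃ V : Set X, IsOpen V ∧ x ∈ V ∧
      ∃ χ : Π x, A x →⋆ₙₐ[ℂ] B x, IsFieldMorphismFamily 𝓐 𝓑 χ ∧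
        ∀ v ∈ V, ∀ a ∈ F, ‖φ v (a v) - χ v (a v)‖ < ε

theorem IsFieldMorphismFamily.locallyApproxByMorphisms (hφ : IsFieldMorphismFamily 𝓐 𝓑 φ) :
    LocallyApproxByMorphisms 𝓐 𝓑 φ := fun x _ _ _ hε =>
  ⟨univ, isOpen_univ, mem_univ x, φ, hφ, fun v _ a _ => by simpa using hε⟩

theorem locallyApproxByMorphisms_of_continuous (hPP : ProjectiveProperty 𝓐 𝓑)
    (hφ : @Continuous X (Σ x, A x →⋆ₙₐ[ℂ] B x) _ (homBundleTopology 𝓐 𝓑)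
      (fun x => ⟨x, φ x⟩)) :
    LocallyApproxByMorphisms 𝓐 𝓑 φ := by
  intro x F hF ε hε
  let := homBundleTopology 𝓐 𝓑
  obtain ⟨χ, hχ, hχx⟩ := hPP x (φ x)
  have hbasic : IsOpen
      {p : Σ x, A x →⋆ₙₐ[ℂ] B x | p.1 ∈ univ ∧ ∀ a ∈ F, ‖p.2 (a p.1) - χ p.1 (a p.1)‖ < ε} :=
    TopologicalSpace.isOpen_generateFrom_of_mem ⟨univ, χ, F, ε, isOpen_univ, hχ, hF, hε, rfl⟩
  refine ⟨_, hφ.isOpen_preimage _ hbasic, ⟨mem_univ x, fun a _ => by simpa [hχx] using hε⟩,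
    χ, hχ, fun v hv => hv.2⟩

variable [∀ x, CStarRing (B x)] [∀ x, StarModule ℂ (B x)] [∀ x, CompleteSpace (B x)]

theorem isFieldMorphismFamily_of_locallyApproxByMorphisms [CompactSpace X] [T2Space X]
    (h𝓑 : IsContinuousField 𝓑) (hφ : LocallyApproxByMorphisms 𝓐 𝓑 φ) :
    IsFieldMorphismFamily 𝓐 𝓑 φ := fun a ha =>
  h𝓑.mem_of_locally_approximable fun x ε hε => by
    obtain ⟨V, hVo, hxV, χ, hχ, hφχ⟩ := hφ x {a} (by simpa using ha) ε hε
    exact ⟨V, hVo, hxV, _, hχ a ha, fun v hv => hφχ v hv a (Finset.mem_singleton_self a)⟩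

theorem IsFieldMorphismFamily.isOpen_setOf_norm_sub_lt (h𝓑 : IsContinuousField 𝓑)
    (hφ : IsFieldMorphismFamily 𝓐 𝓑 φ) (hχ : IsFieldMorphismFamily 𝓐 𝓑 χ)
    {a : Π x, A x} (ha : a ∈ 𝓐) (ε : ℝ) :
    IsOpen {x | ‖φ x (a x) - χ x (a x)‖ < ε} :=
  isOpen_lt (h𝓑.norm_continuous _ (h𝓑.sub_mem (hφ a ha) (hχ a ha))) continuous_const

theorem IsFieldMorphismFamily.continuous_sigmaMk (h𝓑 : IsContinuousField 𝓑)
    (hφ : IsFieldMorphismFamily 𝓐 𝓑 φ) :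
    @Continuous X (Σ x, A x →⋆ₙₐ[ℂ] B x) _ (homBundleTopology 𝓐 𝓑)
      (fun x => ⟨x, φ x⟩) := by
  rw [homBundleTopology, continuous_generateFrom_iff]
  rintro _ ⟨V, χ, F, ε, hVo, hχ, hF, -, rfl⟩
  have hpre : (fun x => (⟨x, φ x⟩ : Σ x, A x →⋆ₙₐ[ℂ] B x)) ⁻¹'
      {p | p.1 ∈ V ∧ ∀ a ∈ F, ‖p.2 (a p.1) - χ p.1 (a p.1)‖ < ε} =
      V ∩ ⋂ a ∈ F, {x | ‖φ x (a x) - χ x (a x)‖ < ε} := by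
    ext x
    simp only [mem_preimage, mem_ofPred_eq, mem_inter_iff, mem_iInter]
  rw [hpre]
  exact hVo.inter <| isOpen_biInter_finset fun a ha =>
    hφ.isOpen_setOf_norm_sub_lt h𝓑 hχ (hF ha) ε

end Criterion

theorem morphism_continuity_criterion_general {X : Type*} [TopologicalSpace X] [CompactSpace X]
    [T2Space X] {A B : X → Type*}
    [∀ x, NormedRing (A x)] [∀ x, StarRing (A x)] [∀ x, NormedAlgebra ℂ (A x)]
    [∀ x, NormedRing (B x)] [∀ x, StarRing (B x)] [∀ x, CStarRing (B x)]
    [∀ x, NormedAlgebra ℂ (B x)] [∀ x, StarModule ℂ (B x)] [∀ x, CompleteSpace (B x)]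
    (𝓐 : Set (Π x, A x)) (𝓑 : Set (Π x, B x))
    (h𝓑 : IsContinuousField 𝓑)
    (φ : Π x, A x →⋆ₙₐ[ℂ] B x) :
    (IsFieldMorphismFamily 𝓐 𝓑 φ ↔
      (∀ (x : X) (F : Finset (Π x, A x)), ↑F ⊆ 𝓐 → ∀ ε > (0 : ℝ),
        ∃ V : Set X, IsOpen V ∧ x ∈ V ∧
          ∃ χ : Π x, A x →⋆ₙₐ[ℂ] B x, IsFieldMorphismFamily 𝓐 𝓑 χ ∧
            ∀ v ∈ V, ∀ a ∈ F, ‖φ v (a v) - χ v (a v)‖ < ε)) ∧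
    (IsFieldMorphismFamily 𝓐 𝓑 φ →
      @Continuous X (Σ x, A x →⋆ₙₐ[ℂ] B x) _ (homBundleTopology 𝓐 𝓑)
        (fun x => ⟨x, φ x⟩)) ∧
    (ProjectiveProperty 𝓐 𝓑 →
      @Continuous X (Σ x, A x →⋆ₙₐ[ℂ] B x) _ (homBundleTopology 𝓐 𝓑)
        (fun x => ⟨x, φ x⟩) →
      (∀ (x : X) (F : Finset (Π x, A x)), ↑F ⊆ 𝓐 → ∀ ε > (0 : ℝ),
        ∃ V : Set X, IsOpen V ∧ x ∈ V ∧
          ∃ χ : Π x, A x →⋆ₙₐ[ℂ] B x, IsFieldMorphismFamily 𝓐 𝓑 χ ∧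
            ∀ v ∈ V, ∀ a ∈ F, ‖φ v (a v) - χ v (a v)‖ < ε)) :=
  ⟨⟨IsFieldMorphismFamily.locallyApproxByMorphisms,
      isFieldMorphismFamily_of_locallyApproxByMorphisms h𝓑⟩,
    fun hφ => hφ.continuous_sigmaMk h𝓑, locallyApproxByMorphisms_of_continuous⟩

/-- **Continuity criterion for continuous field morphisms** (Proposition 3.7). For a
family `(φ x)` of fiberwise *-homomorphisms between continuous fields of C*-algebras
over a compact Hausdorff space: (i) being a continuous field morphism and (ii) the local
approximation criterion are equivalent, and each implies (iii) continuity of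
`x ↦ (φ x, x)` with respect to `τ_{(𝓐 → 𝓑)}`; moreover, if `Hom_{F_{C*}}(𝓐, 𝓑)` has the
projective property (PP), then (iii) implies (ii), so all three are equivalent. -/
theorem morphism_continuity_criterion {X : Type*} [TopologicalSpace X] [CompactSpace X]
    [T2Space X] {A B : X → Type*}
    [∀ x, NormedRing (A x)] [∀ x, StarRing (A x)] [∀ x, CStarRing (A x)]
    [∀ x, NormedAlgebra ℂ (A x)] [∀ x, StarModule ℂ (A x)] [∀ x, CompleteSpace (A x)]
    [∀ x, NormedRing (B x)] [∀ x, StarRing (B x)] [∀ x, CStarRing (B x)]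
    [∀ x, NormedAlgebra ℂ (B x)] [∀ x, StarModule ℂ (B x)] [∀ x, CompleteSpace (B x)]
    (𝓐 : Set (Π x, A x)) (𝓑 : Set (Π x, B x))
    (h𝓐 : IsContinuousField 𝓐) (h𝓑 : IsContinuousField 𝓑)
    (φ : Π x, A x →⋆ₙₐ[ℂ] B x) :
    (IsFieldMorphismFamily 𝓐 𝓑 φ ↔
      (∀ (x : X) (F : Finset (Π x, A x)), ↑F ⊆ 𝓐 → ∀ ε > (0 : ℝ),
        ∃ V : Set X, IsOpen V ∧ x ∈ V ∧
          ∃ χ : Π x, A x →⋆ₙₐ[ℂ] B x, IsFieldMorphismFamily 𝓐 𝓑 χ ∧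
            ∀ v ∈ V, ∀ a ∈ F, ‖φ v (a v) - χ v (a v)‖ < ε)) ∧
    (IsFieldMorphismFamily 𝓐 𝓑 φ →
      @Continuous X (Σ x, A x →⋆ₙₐ[ℂ] B x) _ (homBundleTopology 𝓐 𝓑)
        (fun x => ⟨x, φ x⟩)) ∧
    (ProjectiveProperty 𝓐 𝓑 →
      @Continuous X (Σ x, A x →⋆ₙₐ[ℂ] B x) _ (homBundleTopology 𝓐 𝓑)
        (fun x => ⟨x, φ x⟩) →
      (∀ (x : X) (F : Finset (Π x, A x)), ↑F ⊆ 𝓐 → ∀ ε > (0 : ℝ),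
        ∃ V : Set X, IsOpen V ∧ x ∈ V ∧
          ∃ χ : Π x, A x →⋆ₙₐ[ℂ] B x, IsFieldMorphismFamily 𝓐 𝓑 χ ∧
            ∀ v ∈ V, ∀ a ∈ F, ‖φ v (a v) - χ v (a v)‖ < ε)) :=
  morphism_continuity_criterion_general 𝓐 𝓑 h𝓑 φ
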